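/- For each n, the set M_n = {f ∈ R * F : f(n) = r and n = min supp f} is homeomorphic to R * A_{n+1}, where A_{n+1} = {F ⊆ ℕ : |F| ≤ n+1}; consequently M_n^{(n+1)} = {r·χ_{n}}. -/

import Mathlib

open Filter

def memF (F : Finset ℕ) : Prop :=
  F = ∅ ∨ (F.Nonempty ∧ F.card ≤ sInf (F : Set ℕ) + 2)

def derivSet {α : Type*} [TopologicalSpace α] (A : Set α) : Set α :=
  {x | AccPt x (𝓟 A)}

def RF (R : Set ℝ) : Set (ℕ → ℝ) :=
  {f | (∀ i, f i ∈ R) ∧ ∃ F : Finset ℕ, memF F ∧ ∀ i, f i ≠ 0 ↔ i ∈ F}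

def RA (R : Set ℝ) (n : ℕ) : Set (ℕ → ℝ) :=
  {f | (∀ i, f i ∈ R) ∧ ∃ F : Finset ℕ, F.card ≤ n ∧ ∀ i, f i ≠ 0 → i ∈ F}

/-- `M_n = {f ∈ R * 𝓕 : f(n) = r and n = min supp f}`. -/
def Mset (R : Set ℝ) (r : ℝ) (n : ℕ) : Set (ℕ → ℝ) :=
  {f | f ∈ RF R ∧ f n = r ∧ ∀ i < n, f i = 0}

/-!
The map `g ↦ (0, …, 0, r, g 0, g 1, …)`, with `r` in position `n`, is a closed embedding of
`ℕ → ℝ` that carries `R * 𝒜_{n+1}` onto `M_n`; being a closed embedding, it commutes with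
taking derived sets. In `R * 𝒜_{m+1}` a point with exactly `m + 1` nonzero coordinates is
isolated, because nonzero points of `R` are isolated in `R` and the support cannot grow, while a
point with at most `m` nonzero coordinates is the limit of the points obtained from it by setting
a far-away coordinate to `r`. So the derived set of `R * 𝒜_{m+1}` is `R * 𝒜_m`, and `n + 1`
derivations of `M_n` leave the image of `R * 𝒜_0 = {0}`, which is `r · χ_{n}`.
-/

open Function Set Topology

section General

variable {X Y : Type*} [TopologicalSpace X] [TopologicalSpace Y]

theorem derivSet_eq_derivedSet : (derivSet : Set X → Set X) = derivedSet := rfl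

theorem Topology.IsClosedEmbedding.derivedSet_image {e : X → Y} (he : IsClosedEmbedding e)
    (A : Set X) : derivedSet (e '' A) = e '' derivedSet A := by
  refine (Subset.antisymm ?_ (he.continuous.image_derivedSet he.injective))
  intro y hy
  obtain ⟨x, rfl⟩ : y ∈ range e :=
    he.isClosed_range.closure_subset_iff.2 (image_subset_range e A) (derivedSet_subset_closure _ hy)
  refine ⟨x, ?_, rfl⟩
  rw [mem_derivedSet, accPt_iff_frequently, he.isInducing.nhds_eq_comap, frequently_comap]
  refine (accPt_iff_frequently.1 hy).mono ?_
  rintro _ ⟨hne, x', hx', rfl⟩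
  exact ⟨x', rfl, fun h => hne (h ▸ rfl), hx'⟩

theorem eventually_mem_imp_eq_of_not_accPt {x : X} {C : Set X} (h : ¬AccPt x (𝓟 C)) :
    ∀ᶠ y in 𝓝 x, y ∈ C → y = x := by
  rw [accPt_iff_frequently, not_frequently] at h
  exact h.mono fun y hy hyC => by_contra fun hne => hy ⟨hne, hyC⟩

theorem exists_finset_card_le_superset_iff {α : Type*} {s : Set α} {m : ℕ} :
    (∃ F : Finset α, F.card ≤ m ∧ s ⊆ F) ↔ s.encard ≤ m := by
  constructor
  · rintro ⟨F, hF, hsF⟩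
    exact (encard_le_encard hsF).trans (by simpa using hF)
  · intro hs
    have hfin : s.Finite := finite_of_encard_le_coe hs
    refine ⟨hfin.toFinset, ?_, by simp⟩
    rwa [hfin.encard_eq_coe_toFinset_card, Nat.cast_le] at hs

theorem isClosed_setOf_encard_support_le {ι M : Type*} [Zero M] [TopologicalSpace M] [T1Space M]
    (m : ℕ) : IsClosed {f : ι → M | (support f).encard ≤ m} := by
  refine isOpen_compl_iff.1 (isOpen_iff_mem_nhds.2 fun f hf => ?_)
  replace hf : (m : ℕ∞) < (support f).encard := not_le.1 hf
  obtain ⟨t, hts, htc⟩ := exists_subset_encard_eq (Order.add_one_le_of_lt hf)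
  have ht : t.Finite := finite_of_encard_eq_coe (k := m + 1) (by simpa using htc)
  have hne : ∀ᶠ g in 𝓝 f, ∀ i ∈ t, g i ≠ 0 := (eventually_all_finite ht).2 fun i hi =>
    (continuous_apply i).continuousAt.eventually_ne (hts hi)
  filter_upwards [hne] with g hg
  refine not_le.2 (lt_of_lt_of_le ?_ (htc ▸ encard_le_encard hg))
  exact_mod_cast Nat.lt_succ_self m

end General

section RA

variable {R : Set ℝ}

theorem mem_RA_iff {m : ℕ} {f : ℕ → ℝ} :
    f ∈ RA R m ↔ (∀ i, f i ∈ R) ∧ (support f).encard ≤ m := by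
  simp only [RA, ← exists_finset_card_le_superset_iff]
  rfl

theorem RA_zero (h0 : (0 : ℝ) ∈ R) : RA R 0 = {0} := by
  ext f
  simp only [mem_RA_iff, CharP.cast_eq_zero, nonpos_iff_eq_zero, encard_eq_zero,
    support_eq_empty_iff, mem_singleton_iff]
  exact ⟨And.right, fun hf => ⟨fun i => hf ▸ h0, hf⟩⟩

theorem isClosed_RA (hR : IsClosed R) (m : ℕ) : IsClosed (RA R m) := by
  have hRA : RA R m = univ.pi (fun _ => R) ∩ {f | (support f).encard ≤ m} :=
    Set.ext fun f => mem_RA_iff.trans (by rw [mem_inter_iff, mem_univ_pi]; rfl)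
  rw [hRA]
  exact (isClosed_set_pi fun _ _ => hR).inter (isClosed_setOf_encard_support_le m)

theorem derivedSet_RA_succ_subset (hR : IsClosed R) (hacc : ∀ x, AccPt x (𝓟 R) → x = 0)
    (m : ℕ) : derivedSet (RA R (m + 1)) ⊆ RA R m := by
  intro f hf
  obtain ⟨hvals, hcard⟩ := mem_RA_iff.1
    ((isClosed_iff_derivedSet_subset _).1 (isClosed_RA hR (m + 1)) hf)
  refine mem_RA_iff.2 ⟨hvals, not_lt.1 fun hlt => ?_⟩
  have hfin : (support f).Finite := finite_of_encard_le_coe hcard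
  have hisol : ∀ᶠ g in 𝓝 f, ∀ i ∈ support f, g i ∈ R → g i = f i :=
    (eventually_all_finite hfin).2 fun i hi => (continuous_apply i).continuousAt.eventually
      (eventually_mem_imp_eq_of_not_accPt fun h => hi (hacc _ h))
  obtain ⟨g, ⟨hgf, hgA⟩, hg⟩ := ((accPt_iff_frequently.1 hf).and_eventually hisol).exists
  obtain ⟨hgvals, hgcard⟩ := mem_RA_iff.1 hgA
  have hagree : ∀ i ∈ support f, g i = f i := fun i hi => hg i hi (hgvals i)
  have hsupp : support f = support g := hfin.eq_of_subset_of_encard_le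
    (fun i hi => by rw [mem_support, hagree i hi]; exact hi)
    (hgcard.trans (Order.add_one_le_of_lt hlt))
  refine hgf (funext fun i => ?_)
  by_cases hi : i ∈ support f
  · exact hagree i hi
  · rw [notMem_support.1 hi, ← notMem_support, ← hsupp]
    exact hi

theorem RA_subset_derivedSet_RA_succ {r : ℝ} (hr : r ∈ R) (hr0 : r ≠ 0) (m : ℕ) :
    RA R m ⊆ derivedSet (RA R (m + 1)) := by
  intro f hf
  obtain ⟨hvals, hcard⟩ := mem_RA_iff.1 hf
  have htendsto : Tendsto (fun k => update f k r) atTop (𝓝 f) :=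
    tendsto_pi_nhds.2 fun i => tendsto_const_nhds.congr' <|
      (eventually_gt_atTop i).mono fun k hk => (update_of_ne hk.ne r f).symm
  have hfar : ∀ᶠ k in atTop, k ∉ support f :=
    Nat.cofinite_eq_atTop ▸ (finite_of_encard_le_coe hcard).eventually_cofinite_notMem
  refine accPt_iff_frequently.2 (htendsto.frequently (hfar.mono fun k hk => ?_).frequently)
  refine ⟨fun h => hr0 ?_, mem_RA_iff.2 ⟨?_, ?_⟩⟩
  · simpa [notMem_support.1 hk] using congr_fun h k
  · intro i
    rcases eq_or_ne i k with rfl | hik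
    · simpa using hr
    · simpa [hik] using hvals i
  · calc (support (update f k r)).encard = (insert k (support f)).encard := by
          rw [support_update_of_ne_zero f k hr0]
      _ ≤ (support f).encard + 1 := encard_insert_le _ _
      _ ≤ (m + 1 : ℕ) := by push_cast; gcongr

theorem derivedSet_RA_succ (hR : IsClosed R) (hacc : ∀ x, AccPt x (𝓟 R) → x = 0)
    {r : ℝ} (hr : r ∈ R) (hr0 : r ≠ 0) (m : ℕ) : derivedSet (RA R (m + 1)) = RA R m :=
  (derivedSet_RA_succ_subset hR hacc m).antisymm (RA_subset_derivedSet_RA_succ hr hr0 m)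

theorem derivedSet_iterate_RA (hR : IsClosed R) (hacc : ∀ x, AccPt x (𝓟 R) → x = 0)
    {r : ℝ} (hr : r ∈ R) (hr0 : r ≠ 0) (m k : ℕ) :
    derivedSet^[k] (RA R (m + k)) = RA R m := by
  induction k with
  | zero => rfl
  | succ k ih => rw [iterate_succ_apply, ← add_assoc, derivedSet_RA_succ hR hacc hr hr0, ih]

end RA

section Prefix

variable {α : Type*} [Zero α] (a : α) (n : ℕ)

def prependPrefix (g : ℕ → α) : ℕ → α := fun i =>
  if i < n then 0 else if i = n then a else g (i - (n + 1))

variable {a n} {g : ℕ → α}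

@[simp] theorem prependPrefix_apply_add (i : ℕ) : prependPrefix a n g (n + 1 + i) = g i := by
  simp [prependPrefix, show ¬n + 1 + i < n by omega, show n + 1 + i ≠ n by omega]

@[simp] theorem prependPrefix_apply_self : prependPrefix a n g n = a := by
  simp [prependPrefix]

theorem prependPrefix_apply_of_lt {i : ℕ} (h : i < n) : prependPrefix a n g i = 0 := if_pos h

theorem prependPrefix_zero : prependPrefix a n 0 = fun i => if i = n then a else 0 := by
  ext i
  unfold prependPrefix
  split_ifs <;> first | rfl | omega

theorem leftInverse_prependPrefix :
    LeftInverse (fun (f : ℕ → α) i => f (n + 1 + i)) (prependPrefix a n) :=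
  fun _ => funext prependPrefix_apply_add

theorem mem_range_prependPrefix {f : ℕ → α} (hn : f n = a) (hlt : ∀ i < n, f i = 0) :
    f ∈ range (prependPrefix a n) := by
  refine ⟨fun i => f (n + 1 + i), funext fun i => ?_⟩
  unfold prependPrefix
  split_ifs with h₁ h₂
  · exact (hlt i h₁).symm
  · exact h₂ ▸ hn.symm
  · exact congr_arg f (by omega)

theorem isClosedEmbedding_prependPrefix [TopologicalSpace α] [T2Space α] :
    IsClosedEmbedding (prependPrefix a n) := by
  refine leftInverse_prependPrefix.isClosedEmbedding (by fun_prop) (continuous_pi fun i => ?_)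
  unfold prependPrefix
  split_ifs <;> fun_prop

theorem forall_prependPrefix_mem_iff {s : Set α} (h0 : 0 ∈ s) (ha : a ∈ s) :
    (∀ i, prependPrefix a n g i ∈ s) ↔ ∀ i, g i ∈ s := by
  refine ⟨fun h i => by simpa using h (n + 1 + i), fun h i => ?_⟩
  unfold prependPrefix
  split_ifs
  exacts [h0, ha, h _]

theorem support_prependPrefix (ha : a ≠ 0) :
    support (prependPrefix a n g) = insert n ((n + 1 + ·) '' support g) := by
  ext i
  rcases lt_trichotomy i n with h | rfl | h
  · simp [prependPrefix_apply_of_lt h, h.ne, show ∀ j, n + 1 + j ≠ i by omega]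
  · simp [ha]
  · obtain ⟨j, rfl⟩ : ∃ j, i = n + 1 + j := ⟨i - (n + 1), by omega⟩
    simp [show n + 1 + j ≠ n by omega]

theorem encard_support_prependPrefix (ha : a ≠ 0) :
    (support (prependPrefix a n g)).encard = (support g).encard + 1 := by
  have hn : n ∉ (n + 1 + ·) '' support g := by simp [show ∀ j, n + 1 + j ≠ n by omega]
  rw [support_prependPrefix ha, encard_insert_of_notMem hn,
    (add_right_injective (n + 1)).encard_image]

end Prefix

section Mset

variable {R : Set ℝ} {r : ℝ} {n : ℕ}

theorem memF_iff_card_le {F : Finset ℕ} (hn : n ∈ F) (hmin : ∀ i ∈ F, n ≤ i) :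
    memF F ↔ F.card ≤ n + 2 := by
  have hInf : sInf (F : Set ℕ) = n := le_antisymm (Nat.sInf_le hn) (le_csInf ⟨n, hn⟩ hmin)
  have hne : F.Nonempty := ⟨n, hn⟩
  simp [memF, hne, hne.ne_empty, hInf]

theorem mem_Mset_iff (hr0 : r ≠ 0) {f : ℕ → ℝ} :
    f ∈ Mset R r n ↔
      (∀ i, f i ∈ R) ∧ f n = r ∧ (∀ i < n, f i = 0) ∧ (support f).encard ≤ n + 2 := by
  constructor
  · rintro ⟨⟨hvals, F, hF, hsupp⟩, hn, hlt⟩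
    have hFsupp : (F : Set ℕ) = support f := Set.ext fun i => (hsupp i).symm
    have hmin : ∀ i ∈ F, n ≤ i := fun i hi => not_lt.1 fun h => (hsupp i).2 hi (hlt i h)
    refine ⟨hvals, hn, hlt, ?_⟩
    rw [← hFsupp, encard_coe_eq_coe_finsetCard]
    exact_mod_cast (memF_iff_card_le ((hsupp n).1 (hn ▸ hr0)) hmin).1 hF
  · rintro ⟨hvals, hn, hlt, hcard⟩
    have hfin : (support f).Finite := finite_of_encard_le_coe (k := n + 2) (by exact_mod_cast hcard)
    refine ⟨⟨hvals, hfin.toFinset, ?_, fun i => by simp⟩, hn, hlt⟩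
    have hmin : ∀ i ∈ hfin.toFinset, n ≤ i := fun i hi =>
      not_lt.1 fun h => (hfin.mem_toFinset.1 hi) (hlt i h)
    rw [memF_iff_card_le (by simp [hn, hr0]) hmin, ← Nat.cast_le (α := ℕ∞),
      ← hfin.encard_eq_coe_toFinset_card]
    exact_mod_cast hcard

theorem prependPrefix_mem_Mset_iff (h0 : (0 : ℝ) ∈ R) (hr : r ∈ R) (hr0 : r ≠ 0)
    {g : ℕ → ℝ} : prependPrefix r n g ∈ Mset R r n ↔ g ∈ RA R (n + 1) := by
  have hcast : ((n : ℕ∞) + 2) = (n + 1 : ℕ) + 1 := by push_cast; ring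
  rw [mem_Mset_iff hr0, mem_RA_iff, forall_prependPrefix_mem_iff h0 hr,
    encard_support_prependPrefix hr0, hcast, ENat.add_le_add_iff_right ENat.one_ne_top]
  simp only [prependPrefix_apply_self, Nat.cast_add, Nat.cast_one, true_and]
  exact and_congr_right fun _ => and_iff_right fun i hi => prependPrefix_apply_of_lt hi

theorem Mset_eq_image_RA (h0 : (0 : ℝ) ∈ R) (hr : r ∈ R) (hr0 : r ≠ 0) :
    Mset R r n = prependPrefix r n '' RA R (n + 1) := by
  ext f
  constructor
  · intro hf
    obtain ⟨-, hn, hlt, -⟩ := (mem_Mset_iff hr0).1 hf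
    obtain ⟨g, rfl⟩ := mem_range_prependPrefix hn hlt
    exact ⟨g, (prependPrefix_mem_Mset_iff h0 hr hr0).1 hf, rfl⟩
  · rintro ⟨g, hg, rfl⟩
    exact (prependPrefix_mem_Mset_iff h0 hr hr0).2 hg

end Mset

theorem Mset_homeomorph_derivSet_general (R : Set ℝ) (hcomp : IsCompact R)
    (h0 : (0 : ℝ) ∈ R)
    (hacc : ∀ x : ℝ, AccPt x (𝓟 R) ↔ x = 0)
    (r : ℝ) (hr : r ∈ R) (hrpos : 0 < r) (n : ℕ) :
    Nonempty (Mset R r n ≃ₜ RA R (n + 1)) ∧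
      derivSet^[n + 1] (Mset R r n) = {fun i => if i = n then r else 0} := by
  have hMset : Mset R r n = _ := Mset_eq_image_RA h0 hr hrpos.ne'
  have he : IsClosedEmbedding (prependPrefix r n) := isClosedEmbedding_prependPrefix
  refine ⟨⟨(Homeomorph.setCongr hMset).trans (he.isEmbedding.homeomorphImage _).symm⟩, ?_⟩
  have hsemiconj : Semiconj (image (prependPrefix r n)) derivedSet derivedSet :=
    fun A => (he.derivedSet_image A).symm
  have hderiv := derivedSet_iterate_RA hcomp.isClosed (fun x => (hacc x).1) hr hrpos.ne' 0 (n + 1)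
  rw [zero_add] at hderiv
  rw [derivSet_eq_derivedSet, hMset, ← hsemiconj.iterate_right, hderiv, RA_zero h0,
    image_singleton, prependPrefix_zero]

/-- `M_n` is homeomorphic to `R * 𝒜_{n+1}`; consequently its `(n+1)`-st
Cantor–Bendixson derivative is the singleton `{r · χ_{n}}`. -/
theorem Mset_homeomorph_derivSet (R : Set ℝ) (hc : R.Countable) (hcomp : IsCompact R)
    (hpos : R ⊆ Set.Ici 0) (h0 : (0 : ℝ) ∈ R)
    (hacc : ∀ x : ℝ, AccPt x (𝓟 R) ↔ x = 0)
    (r : ℝ) (hr : r ∈ R) (hrpos : 0 < r) (n : ℕ) :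
    Nonempty (Mset R r n ≃ₜ RA R (n + 1)) ∧
      derivSet^[n + 1] (Mset R r n) = {fun i => if i = n then r else 0} :=
  Mset_homeomorph_derivSet_general R hcomp h0 hacc r hr hrpos n
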